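/- arXiv:2301.12019 — 2 statements merged into one kernel-verified Lean document; each statement's English description precedes it below -/
import Mathlib

section
/- Let L : X → ℝ^K and ℓ : X → ℝ be continuous linear maps, and let L' : X → ℝ^{K+1} be defined by L'(w) = (L(w), ℓ(w)). Let Γ ∈ ℝ^{K×K} be symmetric positive definite, and let v ∈ ℝ^K, s ∈ ℝ be such that Γ' = [[Γ, v], [vᵀ, s]] is symmetric positive definite. Then the observability coefficient is non-decreasing under this expansion: inf_{u≠0} ‖L' x(u)‖_{Γ'} / ‖u‖_pr ≥ inf_{u≠0} ‖L x(u)‖_Γ / ‖u‖_pr, where ‖d‖_{Γ'}² := dᵀΓ'⁻¹d and ‖d‖_Γ² := dᵀΓ⁻¹d. -/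
open Matrix

/-- The norm `‖d‖_A := √(dᵀ A⁻¹ d)` induced by the inverse of an SPD matrix `A`. -/
noncomputable def invWeightedNorm {n : Type*} [Fintype n] [DecidableEq n]
    (A : Matrix n n ℝ) (d : n → ℝ) : ℝ :=
  Real.sqrt (d ⬝ᵥ (A⁻¹ *ᵥ d))

/-- The noise covariance matrix expanded by one additional sensor with cross-covariances
`v` and variance `s`: `Γ' = [[Γ, v], [vᵀ, s]]`. -/
def expandedCov {K : ℕ} (Γ : Matrix (Fin K) (Fin K) ℝ) (v : Fin K → ℝ) (s : ℝ) :
    Matrix (Fin K ⊕ Fin 1) (Fin K ⊕ Fin 1) ℝ :=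
  Matrix.fromBlocks Γ (Matrix.of fun i _ => v i) (Matrix.of fun _ j => v j)
    (Matrix.of fun _ _ => s)

lemma quad_lb {n : Type*} [Fintype n] [DecidableEq n] {A : Matrix n n ℝ} (hA : A.PosDef)
    (c d : n → ℝ) : 2 * (c ⬝ᵥ d) - c ⬝ᵥ (A *ᵥ c) ≤ d ⬝ᵥ (A⁻¹ *ᵥ d) := by
  have hinv : A * A⁻¹ = 1 := A.mul_nonsing_inv hA.det_pos.ne'.isUnit
  have hsymm : Aᵀ = A := hA.isHermitian
  set e : n → ℝ := A⁻¹ *ᵥ d - c with he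
  have h0 : 0 ≤ e ⬝ᵥ (A *ᵥ e) := by
    have := hA.posSemidef.dotProduct_mulVec_nonneg e
    simpa using this
  have hAe : A *ᵥ (A⁻¹ *ᵥ d) = d := by
    rw [mulVec_mulVec, hinv, one_mulVec]
  have hdc : (A⁻¹ *ᵥ d) ⬝ᵥ (A *ᵥ c) = d ⬝ᵥ c := by
    rw [dotProduct_mulVec, ← mulVec_transpose, hsymm, hAe]
  have hdd : (A⁻¹ *ᵥ d) ⬝ᵥ d = d ⬝ᵥ (A⁻¹ *ᵥ d) := dotProduct_comm _ _
  have hcd : c ⬝ᵥ d = d ⬝ᵥ c := dotProduct_comm _ _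
  have hexp : e ⬝ᵥ (A *ᵥ e) = d ⬝ᵥ (A⁻¹ *ᵥ d) - 2 * (c ⬝ᵥ d) + c ⬝ᵥ (A *ᵥ c) := by
    rw [he]
    rw [mulVec_sub, sub_dotProduct, dotProduct_sub, dotProduct_sub, hAe, hdc, hdd, hcd]
    ring
  linarith [hexp ▸ h0]

lemma expanded_quad_ge {K : ℕ} {Γ : Matrix (Fin K) (Fin K) ℝ} (hΓ : Γ.PosDef)
    {v : Fin K → ℝ} {s : ℝ}
    (hΓ' : (expandedCov Γ v s).PosDef)
    (d : Fin K → ℝ) (t : Fin 1 → ℝ) :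
    d ⬝ᵥ (Γ⁻¹ *ᵥ d) ≤ (Sum.elim d t) ⬝ᵥ ((expandedCov Γ v s)⁻¹ *ᵥ (Sum.elim d t)) := by
  have h := quad_lb hΓ' (Sum.elim (Γ⁻¹ *ᵥ d) (0 : Fin 1 → ℝ)) (Sum.elim d t)
  have hinv : Γ * Γ⁻¹ = 1 := Γ.mul_nonsing_inv hΓ.det_pos.ne'.isUnit
  have hGe : Γ *ᵥ (Γ⁻¹ *ᵥ d) = d := by rw [mulVec_mulVec, hinv, one_mulVec]
  have h1 : (Sum.elim (Γ⁻¹ *ᵥ d) 0 : Fin K ⊕ Fin 1 → ℝ) ⬝ᵥ Sum.elim d t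
      = (Γ⁻¹ *ᵥ d) ⬝ᵥ d := by
    rw [sumElim_dotProduct_sumElim, zero_dotProduct, add_zero]
  have h2 : (Sum.elim (Γ⁻¹ *ᵥ d) 0 : Fin K ⊕ Fin 1 → ℝ) ⬝ᵥ
      ((expandedCov Γ v s) *ᵥ Sum.elim (Γ⁻¹ *ᵥ d) (0 : Fin 1 → ℝ)) = (Γ⁻¹ *ᵥ d) ⬝ᵥ d := by
    rw [expandedCov, fromBlocks_mulVec, sumElim_dotProduct_sumElim]
    simp [mulVec_zero, hGe]
  rw [h1, h2] at h
  have hdd : (Γ⁻¹ *ᵥ d) ⬝ᵥ d = d ⬝ᵥ (Γ⁻¹ *ᵥ d) := dotProduct_comm _ _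
  linarith [h, hdd ▸ h]

/-- The observability coefficient is non-decreasing when the observation operator is
expanded by one additional sensor. -/
theorem observability_monotone_expansion {K M : ℕ}
    {X : Type*} [NormedAddCommGroup X] [InnerProductSpace ℝ X]
    (x : (Fin M → ℝ) →L[ℝ] X)
    (L : X →L[ℝ] (Fin K → ℝ)) (ℓ : X →L[ℝ] ℝ)
    (L' : X → (Fin K ⊕ Fin 1 → ℝ))
    (hL' : ∀ w : X, L' w = Sum.elim (L w) fun _ => ℓ w)
    (Γ : Matrix (Fin K) (Fin K) ℝ) (hΓ : Γ.PosDef)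
    (v : Fin K → ℝ) (s : ℝ)
    (hΓ' : (expandedCov Γ v s).PosDef)
    (Spr : Matrix (Fin M) (Fin M) ℝ) (hpr : Spr.PosDef) :
    (⨅ u : {w : Fin M → ℝ // w ≠ 0},
        invWeightedNorm (expandedCov Γ v s) (L' (x u.1)) / invWeightedNorm Spr u.1)
      ≥ ⨅ u : {w : Fin M → ℝ // w ≠ 0},
          invWeightedNorm Γ (L (x u.1)) / invWeightedNorm Spr u.1 := by
  apply ciInf_mono
  · refine ⟨0, ?_⟩
    rintro y ⟨u, rfl⟩
    unfold invWeightedNorm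
    positivity
  · intro u
    unfold invWeightedNorm
    apply div_le_div_of_nonneg_right ?_ ?_ |>.trans_eq rfl
    · rw [hL']
      exact Real.sqrt_le_sqrt (expanded_quad_ge hΓ hΓ' (L (x u.1)) (fun _ => ℓ (x u.1)))
    · exact Real.sqrt_nonneg _
end

section
/- Let L : X → ℝ^K and ℓ : X → ℝ be continuous linear maps, and let L' : X → ℝ^{K+1} be defined by L'(w) = (L(w), ℓ(w)). Let Γ ∈ ℝ^{K×K} be symmetric positive definite, and let v ∈ ℝ^K, s ∈ ℝ be such that Γ' = [[Γ, v], [vᵀ, s]] is symmetric positive definite. Then the observation continuity constant is non-decreasing under this expansion: sup_{‖w‖_X = 1} ‖L'(w)‖_{Γ'} ≥ sup_{‖w‖_X = 1} ‖L(w)‖_Γ, where ‖d‖_{Γ'}² := dᵀΓ'⁻¹d and ‖d‖_Γ² := dᵀΓ⁻¹d. -/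
open Matrix

lemma quad_lb_s11 {n : Type*} [Fintype n] [DecidableEq n] (M : Matrix n n ℝ) (hM : M.PosDef)
    (x y : n → ℝ) : 2 * (x ⬝ᵥ y) - y ⬝ᵥ (M *ᵥ y) ≤ x ⬝ᵥ (M⁻¹ *ᵥ x) := by
  have hMinv : M * M⁻¹ = 1 := Matrix.mul_nonsing_inv M (isUnit_iff_ne_zero.mpr hM.det_pos.ne')
  have hsym : Mᵀ = M := hM.1
  set u := M⁻¹ *ᵥ x with hu
  have hMu : M *ᵥ u = x := by
    rw [hu, Matrix.mulVec_mulVec, hMinv, Matrix.one_mulVec]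
  have h0 : 0 ≤ (u - y) ⬝ᵥ (M *ᵥ (u - y)) := by
    have := hM.posSemidef.dotProduct_mulVec_nonneg (u - y); simpa using this
  have hexp : (u - y) ⬝ᵥ (M *ᵥ (u - y))
      = x ⬝ᵥ (M⁻¹ *ᵥ x) - 2 * (x ⬝ᵥ y) + y ⬝ᵥ (M *ᵥ y) := by
    have huMy : u ⬝ᵥ (M *ᵥ y) = x ⬝ᵥ y := by
      rw [Matrix.dotProduct_mulVec, ← Matrix.mulVec_transpose, hsym, hMu]
    have hyMu : y ⬝ᵥ (M *ᵥ u) = x ⬝ᵥ y := by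
      rw [hMu, dotProduct_comm]
    have huMu : u ⬝ᵥ (M *ᵥ u) = x ⬝ᵥ (M⁻¹ *ᵥ x) := by
      rw [hMu, dotProduct_comm]
    rw [Matrix.mulVec_sub, sub_dotProduct, dotProduct_sub,
      dotProduct_sub, huMy, hyMu, huMu]
    ring
  linarith [hexp ▸ h0]

lemma pointwise_ge {K : ℕ} (Γ : Matrix (Fin K) (Fin K) ℝ) (hΓ : Γ.PosDef)
    (v : Fin K → ℝ) (s : ℝ) (hΓ' : (expandedCov Γ v s).PosDef)
    (d : Fin K → ℝ) (t : ℝ) :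
    d ⬝ᵥ (Γ⁻¹ *ᵥ d) ≤ (Sum.elim d fun _ => t) ⬝ᵥ
      ((expandedCov Γ v s)⁻¹ *ᵥ (Sum.elim d fun _ => t)) := by
  set y : Fin K → ℝ := Γ⁻¹ *ᵥ d with hy
  set y' : Fin K ⊕ Fin 1 → ℝ := Sum.elim y 0 with hy'
  have key := quad_lb_s11 (expandedCov Γ v s) hΓ' (Sum.elim d fun _ => t) y'
  have hΓy : Γ *ᵥ y = d := by
    rw [hy, Matrix.mulVec_mulVec, Matrix.mul_nonsing_inv Γ
      (isUnit_iff_ne_zero.mpr hΓ.det_pos.ne'), Matrix.one_mulVec]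
  have h1 : (Sum.elim d fun _ => t) ⬝ᵥ y' = d ⬝ᵥ y := by
    simp [hy', dotProduct, Fintype.sum_sum_type]
  have h2 : y' ⬝ᵥ ((expandedCov Γ v s) *ᵥ y') = d ⬝ᵥ y := by
    rw [hy', expandedCov, Matrix.fromBlocks_mulVec]
    simp [dotProduct, Fintype.sum_sum_type, hΓy, mul_comm]
  have h3 : d ⬝ᵥ y = d ⬝ᵥ (Γ⁻¹ *ᵥ d) := by rw [hy]
  rw [h1, h2, h3] at key
  linarith

lemma quad_bound {n : Type*} [Fintype n] [DecidableEq n] (M : Matrix n n ℝ)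
    (d : n → ℝ) (C : ℝ) (hC : 0 ≤ C) (hd : ∀ i, |d i| ≤ C) :
    d ⬝ᵥ (M *ᵥ d) ≤ ∑ i, ∑ j, C * (|M i j| * C) := by
  calc d ⬝ᵥ (M *ᵥ d) = ∑ i, ∑ j, d i * (M i j * d j) := by
        simp [dotProduct, Matrix.mulVec, Finset.mul_sum]
    _ ≤ ∑ i, ∑ j, C * (|M i j| * C) := by
        refine Finset.sum_le_sum fun i _ => Finset.sum_le_sum fun j _ => ?_
        calc d i * (M i j * d j) ≤ |d i * (M i j * d j)| := le_abs_self _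
          _ = |d i| * (|M i j| * |d j|) := by rw [abs_mul, abs_mul]
          _ ≤ C * (|M i j| * C) := by
              exact mul_le_mul (hd i)
                (mul_le_mul_of_nonneg_left (hd j) (abs_nonneg _)) (by positivity) hC

/-- The observation continuity constant is non-decreasing when the observation operator
is expanded by one additional sensor. -/
theorem continuity_constant_monotone_expansion {K : ℕ}
    {X : Type*} [NormedAddCommGroup X] [InnerProductSpace ℝ X]
    (L : X →L[ℝ] (Fin K → ℝ)) (ℓ : X →L[ℝ] ℝ)
    (L' : X → (Fin K ⊕ Fin 1 → ℝ))
    (hL' : ∀ w : X, L' w = Sum.elim (L w) fun _ => ℓ w)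
    (Γ : Matrix (Fin K) (Fin K) ℝ) (hΓ : Γ.PosDef)
    (v : Fin K → ℝ) (s : ℝ)
    (hΓ' : (expandedCov Γ v s).PosDef) :
    (⨆ w : {w : X // ‖w‖ = 1}, invWeightedNorm (expandedCov Γ v s) (L' w.1))
      ≥ ⨆ w : {w : X // ‖w‖ = 1}, invWeightedNorm Γ (L w.1) := by
  rcases isEmpty_or_nonempty {w : X // ‖w‖ = 1} with h | h
  · simp [Real.iSup_of_isEmpty]
  · set C := max ‖L‖ ‖ℓ‖ with hC
    have hC0 : 0 ≤ C := le_trans (norm_nonneg L) (le_max_left _ _)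
    have hbd : ∀ w : {w : X // ‖w‖ = 1}, invWeightedNorm (expandedCov Γ v s) (L' w.1) ≤
        Real.sqrt (∑ i, ∑ j, C * (|(expandedCov Γ v s)⁻¹ i j| * C)) := by
      intro w
      apply Real.sqrt_le_sqrt
      apply quad_bound _ _ _ hC0
      intro i
      rw [hL']
      cases i with
      | inl k =>
        simp only [Sum.elim_inl]
        calc |L w.1 k| ≤ ‖L w.1‖ := norm_le_pi_norm (L w.1) k
          _ ≤ ‖L‖ * ‖w.1‖ := L.le_opNorm _
          _ = ‖L‖ := by rw [w.2, mul_one]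
          _ ≤ C := le_max_left _ _
      | inr k =>
        simp only [Sum.elim_inr]
        calc |ℓ w.1| = ‖ℓ w.1‖ := (Real.norm_eq_abs _).symm
          _ ≤ ‖ℓ‖ * ‖w.1‖ := ℓ.le_opNorm _
          _ = ‖ℓ‖ := by rw [w.2, mul_one]
          _ ≤ C := le_max_right _ _
    apply ciSup_mono
    · exact ⟨_, by rintro r ⟨w, rfl⟩; exact hbd w⟩
    · intro w
      unfold invWeightedNorm
      apply Real.sqrt_le_sqrt
      rw [hL']
      exact pointwise_ge Γ hΓ v s hΓ' (L w.1) (ℓ w.1)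
end
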